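/- Let G = (V,E,Ω) be a finite connected graph with V ⊂ ℝⁿ (adjacent vertices distinct as points, each vertex of V \ Ω having nonempty neighborhood), Ω ⊆ V nonempty, and f : Ω → ℝᵐ. If u is a tight extension of f on G, then u is a Kirszbraun extension of f on G, i.e., u(x) = K(u,S(x))(x) for all x ∈ V \ Ω. -/

import Mathlib

/-!
If `u x` did not minimize `y ↦ max_{a ∈ S(x)} ‖u a - y‖ / ‖a - x‖`, say a point `z` did better,
then redefining `u` to be `z` at `x` strictly lowers the local Lipschitz constant at `x`,
while at any other vertex `w` the constant can only grow through the edge `wx`, hence to at most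
the new constant at `x`. The modified extension is then tighter than `u`.
-/

/-- Local Lipschitz constant of `v` at `x` with respect to the graph with vertex set `V`
and adjacency relation `Adj` (with `sSup ∅ = 0` by the convention of `Real.sSup`). -/
noncomputable def locLip {n m : ℕ} (V : Finset (EuclideanSpace ℝ (Fin n)))
    (Adj : EuclideanSpace ℝ (Fin n) → EuclideanSpace ℝ (Fin n) → Prop)
    (v : EuclideanSpace ℝ (Fin n) → EuclideanSpace ℝ (Fin m))
    (x : EuclideanSpace ℝ (Fin n)) : ℝ :=
  sSup {r : ℝ | ∃ y ∈ V, Adj x y ∧ r = ‖v y - v x‖ / ‖y - x‖}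

/-- `v` is tighter than `u` (max over the empty set is `0`). -/
noncomputable def Tighter {n m : ℕ} (V Ω : Finset (EuclideanSpace ℝ (Fin n)))
    (Adj : EuclideanSpace ℝ (Fin n) → EuclideanSpace ℝ (Fin n) → Prop)
    (v u : EuclideanSpace ℝ (Fin n) → EuclideanSpace ℝ (Fin m)) : Prop :=
  sSup {r : ℝ | ∃ x ∈ V, x ∉ Ω ∧ locLip V Adj v x < locLip V Adj u x ∧ r = locLip V Adj u x} >
  sSup {r : ℝ | ∃ x ∈ V, x ∉ Ω ∧ locLip V Adj u x < locLip V Adj v x ∧ r = locLip V Adj v x}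

open Function

lemma Finset.bddAbove_of_forall_exists_eq {α : Type*} (s : Finset α) (F : α → ℝ) {S : Set ℝ}
    (h : ∀ r ∈ S, ∃ a ∈ s, r = F a) : BddAbove S :=
  (s.finite_toSet.image F).bddAbove.mono fun r hr => by
    obtain ⟨a, ha, rfl⟩ := h r hr
    exact ⟨a, ha, rfl⟩

section LocLip

variable {n m : ℕ} {V : Finset (EuclideanSpace ℝ (Fin n))}
  {Adj : EuclideanSpace ℝ (Fin n) → EuclideanSpace ℝ (Fin n) → Prop}
  {u v : EuclideanSpace ℝ (Fin n) → EuclideanSpace ℝ (Fin m)} {x y : EuclideanSpace ℝ (Fin n)}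

lemma locLip_nonneg : 0 ≤ locLip V Adj v x :=
  Real.sSup_nonneg fun _ ⟨_, _, _, hr⟩ => hr ▸ by positivity

lemma le_locLip (hy : y ∈ V) (hxy : Adj x y) :
    ‖v y - v x‖ / ‖y - x‖ ≤ locLip V Adj v x :=
  le_csSup (V.bddAbove_of_forall_exists_eq _ fun _ ⟨a, ha, _, hr⟩ => ⟨a, ha, hr⟩)
    ⟨y, hy, hxy, rfl⟩

lemma locLip_le {c : ℝ} (hc : 0 ≤ c)
    (h : ∀ y ∈ V, Adj x y → ‖v y - v x‖ / ‖y - x‖ ≤ c) : locLip V Adj v x ≤ c :=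
  Real.sSup_le (fun _ ⟨a, ha, hxa, hr⟩ => hr ▸ h a ha hxa) hc

lemma tighter_of_locLip_lt {Ω : Finset (EuclideanSpace ℝ (Fin n))}
    (hxV : x ∈ V) (hxΩ : x ∉ Ω) (hlt : locLip V Adj v x < locLip V Adj u x)
    (hle : ∀ w ∈ V, w ≠ x → locLip V Adj v w ≤ max (locLip V Adj u w) (locLip V Adj v x)) :
    Tighter V Ω Adj v u := by
  have hgain : locLip V Adj u x ≤ sSup {r : ℝ | ∃ w ∈ V, w ∉ Ω ∧
      locLip V Adj v w < locLip V Adj u w ∧ r = locLip V Adj u w} :=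
    le_csSup (V.bddAbove_of_forall_exists_eq _ fun _ ⟨w, hw, _, _, hr⟩ => ⟨w, hw, hr⟩)
      ⟨x, hxV, hxΩ, hlt, rfl⟩
  have hloss : sSup {r : ℝ | ∃ w ∈ V, w ∉ Ω ∧
      locLip V Adj u w < locLip V Adj v w ∧ r = locLip V Adj v w} ≤ locLip V Adj v x := by
    refine Real.sSup_le (fun _ ⟨w, hwV, _, huv, hr⟩ => hr ▸ ?_) locLip_nonneg
    by_cases hwx : w = x
    · rw [hwx]
    · exact (le_max_iff.mp (hle w hwV hwx)).resolve_left huv.not_ge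
  exact hloss.trans_lt (hlt.trans_le hgain)

variable [DecidableEq (EuclideanSpace ℝ (Fin n))]

lemma locLip_update_self (hx : ¬ Adj x x) (u : EuclideanSpace ℝ (Fin n) → EuclideanSpace ℝ (Fin m))
    (z : EuclideanSpace ℝ (Fin m)) :
    locLip V Adj (update u x z) x = sSup {r : ℝ | ∃ a ∈ V, Adj x a ∧ r = ‖u a - z‖ / ‖a - x‖} := by
  unfold locLip
  congr 1; ext r
  refine exists_congr fun a => and_congr_right fun _ => and_congr_right fun hxa => ?_
  rw [update_self, update_of_ne (by rintro rfl; exact hx hxa)]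

lemma locLip_update_le (hsymm : ∀ a b, Adj a b → Adj b a) (z : EuclideanSpace ℝ (Fin m))
    {w : EuclideanSpace ℝ (Fin n)} (hwV : w ∈ V) (hw : w ≠ x) :
    locLip V Adj (update u x z) w ≤ max (locLip V Adj u w) (locLip V Adj (update u x z) x) := by
  refine locLip_le (le_max_of_le_left locLip_nonneg) fun a ha hwa => ?_
  rw [update_of_ne hw]
  by_cases hax : a = x
  · subst hax
    calc ‖update u a z a - u w‖ / ‖a - w‖
        = ‖update u a z w - update u a z a‖ / ‖w - a‖ := by
          rw [update_of_ne hw, norm_sub_rev, norm_sub_rev a]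
      _ ≤ _ := le_max_of_le_right (le_locLip hwV (hsymm w a hwa))
  · rw [update_of_ne hax]
    exact le_max_of_le_left (le_locLip ha hwa)

end LocLip

theorem tight_is_kirszbraun_general (n m : ℕ)
    (V : Finset (EuclideanSpace ℝ (Fin n)))
    (Adj : EuclideanSpace ℝ (Fin n) → EuclideanSpace ℝ (Fin n) → Prop)
    (hsymm : ∀ x y, Adj x y → Adj y x)
    (hne : ∀ x y, Adj x y → x ≠ y)
    (Ω : Finset (EuclideanSpace ℝ (Fin n)))
    (f u : EuclideanSpace ℝ (Fin n) → EuclideanSpace ℝ (Fin m))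
    -- u is an extension of f
    (hu : ∀ z ∈ Ω, u z = f z)
    -- u is tight: no extension of f is tighter than u
    (htight : ¬ ∃ v : EuclideanSpace ℝ (Fin n) → EuclideanSpace ℝ (Fin m),
        (∀ z ∈ Ω, v z = f z) ∧ Tighter V Ω Adj v u) :
    ∀ x ∈ V, x ∉ Ω → ∀ z : EuclideanSpace ℝ (Fin m),
      sSup {r : ℝ | ∃ a ∈ V, Adj x a ∧ r = ‖u a - u x‖ / ‖a - x‖}
        ≤ sSup {r : ℝ | ∃ a ∈ V, Adj x a ∧ r = ‖u a - z‖ / ‖a - x‖} := by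
  classical
  intro x hxV hxΩ z
  by_contra! hlt
  rw [← locLip_update_self (fun h => hne x x h rfl) u z] at hlt
  refine htight ⟨update u x z, fun w hw => ?_, tighter_of_locLip_lt hxV hxΩ hlt
    fun w hwV hwx => locLip_update_le hsymm z hwV hwx⟩
  rw [update_of_ne (ne_of_mem_of_not_mem hw hxΩ), hu w hw]

/-- every tight extension `u` of `f` on the graph `G = (V, E, Ω)` is a
Kirszbraun extension: for each `x ∈ V \ Ω`, `u x` is the Kirszbraun value, i.e. `u x`
minimizes `y ↦ max_{a ∈ S(x)} ‖u a - y‖ / ‖a - x‖`. -/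
theorem tight_is_kirszbraun (n m : ℕ)
    (V : Finset (EuclideanSpace ℝ (Fin n)))
    (Adj : EuclideanSpace ℝ (Fin n) → EuclideanSpace ℝ (Fin n) → Prop)
    (hsymm : ∀ x y, Adj x y → Adj y x)
    (hne : ∀ x y, Adj x y → x ≠ y)
    (hconn : ∀ x ∈ V, ∀ y ∈ V,
      Relation.ReflTransGen (fun a b => a ∈ V ∧ b ∈ V ∧ Adj a b) x y)
    (Ω : Finset (EuclideanSpace ℝ (Fin n))) (hΩ : Ω.Nonempty) (hΩV : Ω ⊆ V)
    (hnbr : ∀ x ∈ V, x ∉ Ω → ∃ y ∈ V, Adj x y)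
    (f u : EuclideanSpace ℝ (Fin n) → EuclideanSpace ℝ (Fin m))
    -- u is an extension of f
    (hu : ∀ z ∈ Ω, u z = f z)
    -- u is tight: no extension of f is tighter than u
    (htight : ¬ ∃ v : EuclideanSpace ℝ (Fin n) → EuclideanSpace ℝ (Fin m),
        (∀ z ∈ Ω, v z = f z) ∧ Tighter V Ω Adj v u) :
    ∀ x ∈ V, x ∉ Ω → ∀ z : EuclideanSpace ℝ (Fin m),
      sSup {r : ℝ | ∃ a ∈ V, Adj x a ∧ r = ‖u a - u x‖ / ‖a - x‖}
        ≤ sSup {r : ℝ | ∃ a ∈ V, Adj x a ∧ r = ‖u a - z‖ / ‖a - x‖} :=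
  tight_is_kirszbraun_general n m V Adj hsymm hne Ω f u hu htight
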